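/- arXiv:2304.11646 — 5 statements merged into one kernel-verified Lean document; each statement's English description precedes it below -/
import Mathlib

section
/- Let 0 < a < 1 and let b ≥ 2 be an integer with a·b > 1, and set α = -ln(a)/ln(b) ∈ (0,1). Then the Weierstrass function W(t) = ∑_{n=0}^∞ aⁿ cos(bⁿ π t) is α-Hölder continuous on [0,1]: there exists C > 0 such that |W(t) - W(s)| ≤ C|t-s|^α for all s, t ∈ [0,1]. -/
open Real Finset

/-!
Write `h = |t - s|` and pick `N` with `1 ≤ b ^ N * h ≤ b`. Since `a = b ^ (-α)`, this gives
`a ^ N ≤ h ^ α` and `(a * b) ^ N * h ≤ b ^ (1 - α) * h ^ α`. The first `N` terms of the series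
for `W t - W s` are bounded by the Lipschitz estimate `π * (a * b) ^ n * h`, a geometric sum with
ratio `a * b > 1`, hence of the order of its last term; the remaining terms are bounded by
`2 * a ^ n`, a geometric tail of the order of its first term `a ^ N`.
-/

noncomputable def weierstrass (a b t : ℝ) : ℝ := ∑' n : ℕ, a ^ n * cos (b ^ n * π * t)

lemma geom_sum_le_pow_div_sub_one {r : ℝ} (hr : 1 < r) (N : ℕ) :
    ∑ i ∈ range N, r ^ i ≤ r ^ N / (r - 1) := by
  rw [geom_sum_eq hr.ne']
  gcongr
  linarith

lemma exists_pow_mul_mem_Icc {b h : ℝ} (hb : 1 < b) (hh0 : 0 < h) (hh1 : h ≤ 1) :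
    ∃ N : ℕ, 1 ≤ b ^ N * h ∧ b ^ N * h ≤ b := by
  obtain ⟨n, hn, hn'⟩ := exists_nat_pow_near (one_le_inv₀ hh0 |>.mpr hh1) hb
  refine ⟨n + 1, ?_, ?_⟩
  · rw [← inv_le_iff_one_le_mul₀ hh0]
    exact hn'.le
  · rw [pow_succ', mul_assoc]
    exact mul_le_of_le_one_right (by linarith) (by rwa [← le_div_iff₀ hh0, one_div])

lemma pow_mul_mul_rpow_eq {a b α h : ℝ} (hb : 0 < b) (ha : b ^ (-α) = a) (N : ℕ) (hh : 0 ≤ h) :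
    a ^ N * (b ^ N * h) ^ α = h ^ α := by
  rw [← ha, rpow_pow_comm hb.le, mul_rpow (by positivity) hh, ← mul_assoc,
    ← rpow_add (by positivity), neg_add_cancel, rpow_zero, one_mul]

theorem tsum_le_mul_rpow_of_le_min_geometric {a b α h A B : ℝ} (hb : 1 < b)
    (ha : b ^ (-α) = a) (hα0 : 0 < α) (hα1 : α < 1) (hh0 : 0 < h) (hh1 : h ≤ 1)
    {u : ℕ → ℝ} (hu0 : ∀ n, 0 ≤ u n) (huA : ∀ n, u n ≤ A * a ^ n)
    (huB : ∀ n, u n ≤ B * (a * b) ^ n * h) :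
    ∑' n, u n ≤ (B * b ^ (1 - α) / (a * b - 1) + A / (1 - a)) * h ^ α := by
  have hb0 : 0 < b := by linarith
  have ha0 : 0 < a := ha ▸ rpow_pos_of_pos hb0 _
  have ha1 : a < 1 := ha ▸ rpow_lt_one_of_one_lt_of_neg hb (by linarith)
  have hab : 1 < a * b := by
    rw [← ha, ← rpow_add_one hb0.ne']
    exact one_lt_rpow hb (by linarith)
  have hA0 : 0 ≤ A := by simpa using (hu0 0).trans (huA 0)
  have hB0 : 0 ≤ B := nonneg_of_mul_nonneg_left (by simpa using (hu0 0).trans (huB 0)) hh0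
  have hgeom := summable_geometric_of_lt_one ha0.le ha1
  have hu : Summable u := .of_nonneg_of_le hu0 huA (hgeom.mul_left A)
  obtain ⟨N, hN1, hNb⟩ := exists_pow_mul_mem_Icc hb hh0 hh1
  have hscale := pow_mul_mul_rpow_eq hb0 ha N hh0.le
  set y := b ^ N * h
  have hy : y ≤ y ^ α * b ^ (1 - α) := calc
    y = y ^ α * y ^ (1 - α) := by rw [← rpow_add (by linarith), add_sub_cancel, rpow_one]
    _ ≤ y ^ α * b ^ (1 - α) := by gcongr
  have head : ∑ n ∈ range N, u n ≤ B * b ^ (1 - α) / (a * b - 1) * h ^ α := calc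
    ∑ n ∈ range N, u n ≤ ∑ n ∈ range N, B * h * (a * b) ^ n :=
        sum_le_sum fun n _ ↦ (huB n).trans_eq (by ring)
    _ = B * h * ∑ n ∈ range N, (a * b) ^ n := by rw [mul_sum]
    _ ≤ B * h * ((a * b) ^ N / (a * b - 1)) := by
        gcongr
        exact geom_sum_le_pow_div_sub_one hab N
    _ = B / (a * b - 1) * (a ^ N * y) := by ring
    _ ≤ B / (a * b - 1) * (a ^ N * (y ^ α * b ^ (1 - α))) := by gcongr
    _ = B * b ^ (1 - α) / (a * b - 1) * h ^ α := by rw [← hscale]; ring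
  have tail : ∑' n, u (n + N) ≤ A / (1 - a) * h ^ α := calc
    ∑' n, u (n + N) ≤ ∑' n, A * a ^ N * a ^ n :=
        ((summable_nat_add_iff N).mpr hu).tsum_le_tsum
          (fun n ↦ (huA _).trans_eq (by ring)) (hgeom.mul_left _)
    _ = A / (1 - a) * a ^ N := by
        rw [tsum_mul_left, tsum_geometric_of_lt_one ha0.le ha1]
        ring
    _ ≤ A / (1 - a) * (a ^ N * y ^ α) := by
        gcongr
        exact le_mul_of_one_le_right (by positivity) (one_le_rpow hN1 hα0.le)
    _ = A / (1 - a) * h ^ α := by rw [hscale]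
  calc ∑' n, u n = ∑ n ∈ range N, u n + ∑' n, u (n + N) := (hu.sum_add_tsum_nat_add N).symm
    _ ≤ _ := by linarith

lemma abs_weierstrass_sub_le_tsum {a : ℝ} (ha0 : 0 ≤ a) (ha1 : a < 1) (b s t : ℝ) :
    |weierstrass a b t - weierstrass a b s| ≤
      ∑' n : ℕ, a ^ n * |cos (b ^ n * π * t) - cos (b ^ n * π * s)| := by
  have hsum (x : ℝ) : Summable fun n : ℕ ↦ a ^ n * cos (b ^ n * π * x) :=
    (summable_geometric_of_lt_one ha0 ha1).of_norm_bounded fun n ↦ by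
      simpa [abs_of_nonneg ha0] using
        mul_le_of_le_one_right (pow_nonneg ha0 n) (abs_cos_le_one (b ^ n * π * x))
  have hdiff := (hsum t).sub (hsum s)
  rw [weierstrass, weierstrass, ← (hsum t).tsum_sub (hsum s)]
  refine (norm_tsum_le_tsum_norm hdiff.norm).trans_eq (tsum_congr fun n ↦ ?_)
  rw [← mul_sub, norm_mul, norm_pow, norm_of_nonneg ha0, norm_eq_abs]

theorem abs_weierstrass_sub_le_mul_rpow {a b α s t : ℝ} (hb : 1 < b) (ha : b ^ (-α) = a)
    (hα0 : 0 < α) (hα1 : α < 1) (hts : |t - s| ≤ 1) :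
    |weierstrass a b t - weierstrass a b s| ≤
      (π * b ^ (1 - α) / (a * b - 1) + 2 / (1 - a)) * |t - s| ^ α := by
  have hb0 : 0 < b := by linarith
  have ha0 : 0 < a := ha ▸ rpow_pos_of_pos hb0 _
  have ha1 : a < 1 := ha ▸ rpow_lt_one_of_one_lt_of_neg hb (by linarith)
  rcases (abs_nonneg (t - s)).eq_or_lt with hts0 | hts0
  · obtain rfl : t = s := sub_eq_zero.mp (abs_eq_zero.mp hts0.symm)
    simp [zero_rpow hα0.ne']
  refine (abs_weierstrass_sub_le_tsum ha0.le ha1 b s t).trans <|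
    tsum_le_mul_rpow_of_le_min_geometric hb ha hα0 hα1 hts0 hts (fun n ↦ by positivity)
      (fun n ↦ ?_) (fun n ↦ ?_)
  · have h2 : |cos (b ^ n * π * t) - cos (b ^ n * π * s)| ≤ 1 + 1 :=
      (abs_sub _ _).trans (add_le_add (abs_cos_le_one _) (abs_cos_le_one _))
    nlinarith [pow_pos ha0 n]
  · calc a ^ n * |cos (b ^ n * π * t) - cos (b ^ n * π * s)|
        ≤ a ^ n * |b ^ n * π * t - b ^ n * π * s| :=
          mul_le_mul_of_nonneg_left (abs_cos_sub_cos_le _ _) (by positivity)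
      _ = π * (a * b) ^ n * |t - s| := by
        rw [← mul_sub, abs_mul, abs_of_pos (by positivity)]
        ring

theorem weierstrass_holder
    (a : ℝ) (b : ℕ) (ha0 : 0 < a) (ha1 : a < 1) (hb : 2 ≤ b)
    (hab : 1 < a * b) (α : ℝ) (hα : α = -Real.log a / Real.log b)
    (W : ℝ → ℝ) (hW : ∀ t, W t = ∑' n : ℕ, a ^ n * Real.cos (b ^ n * π * t)) :
    ∃ C > 0, ∀ s ∈ Set.Icc (0:ℝ) 1, ∀ t ∈ Set.Icc (0:ℝ) 1,
      |W t - W s| ≤ C * |t - s| ^ α := by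
  obtain rfl : W = weierstrass a b := funext hW
  have hb1 : (1 : ℝ) < b := by exact_mod_cast hb
  have hα' : α = -logb b a := by rw [hα, logb, neg_div]
  have hα0 : 0 < α := hα' ▸ neg_pos.mpr (logb_neg hb1 ha0 ha1)
  have hα1 : α < 1 := by
    have := logb_pos hb1 hab
    rw [logb_mul ha0.ne' (by positivity), logb_self_eq_one hb1] at this
    linarith
  have ha : (b : ℝ) ^ (-α) = a := by rw [hα', neg_neg, rpow_logb (by positivity) hb1.ne' ha0]
  refine ⟨π * b ^ (1 - α) / (a * b - 1) + 2 / (1 - a), ?_, fun s hs t ht ↦ ?_⟩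
  · exact add_pos (div_pos (by positivity) (by linarith)) (div_pos two_pos (by linarith))
  exact abs_weierstrass_sub_le_mul_rpow hb1 ha hα0 hα1 (Real.dist_le_of_mem_Icc_01 ht hs)
end

section
/- For real numbers 0 ≤ s ≤ t ≤ 1 and positive reals m, n, the integral J(s,t) = ∫_s^t (cos(m π r) - cos(m π s)) · (-n π sin(n π r)) dr satisfies |J(s,t)| ≤ C · m · (t-s) for some absolute constant C (e.g. C = 3π works). -/
/-!
Integrating by parts against `v = cos (n π ·)` moves the derivative onto `cos (m π ·)`, leaving
a boundary term `(cos (m π t) - cos (m π s)) cos (n π t)` and an integrand `m π sin (m π r) cos (n π r)`.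
Each is at most `m π (t - s)` in absolute value, the first by the Lipschitz bound for cosine and the
second by `|sin|, |cos| ≤ 1`; so `C = 2π` works, independently of `n`.
-/

open Real intervalIntegral

theorem hasDerivAt_cos_mul (a x : ℝ) :
    HasDerivAt (fun r => cos (a * r)) (-(a * sin (a * x))) x := by
  simpa [mul_comm] using ((hasDerivAt_id x).const_mul a).cos

theorem integral_cos_mul_sub_mul_deriv_cos_mul (a b s t : ℝ) :
    ∫ r in s..t, (cos (a * r) - cos (a * s)) * (-(b * sin (b * r))) =
      (cos (a * t) - cos (a * s)) * cos (b * t) + a * ∫ r in s..t, sin (a * r) * cos (b * r) := by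
  have hu : ∀ x ∈ Set.uIcc s t,
      HasDerivAt (fun r => cos (a * r) - cos (a * s)) (-(a * sin (a * x))) x :=
    fun x _ => (hasDerivAt_cos_mul a x).sub_const _
  have hv : ∀ x ∈ Set.uIcc s t, HasDerivAt (fun r => cos (b * r)) (-(b * sin (b * x))) x :=
    fun x _ => hasDerivAt_cos_mul b x
  rw [integral_mul_deriv_eq_deriv_mul hu hv ((by fun_prop : Continuous _).intervalIntegrable _ _)
    ((by fun_prop : Continuous _).intervalIntegrable _ _)]
  simp only [sub_self, zero_mul, sub_zero, neg_mul, integral_neg, sub_neg_eq_add, mul_assoc,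
    integral_const_mul]

theorem abs_integral_cos_mul_sub_mul_deriv_cos_mul_le (a b s t : ℝ) :
    |∫ r in s..t, (cos (a * r) - cos (a * s)) * (-(b * sin (b * r)))| ≤ 2 * |a| * |t - s| := by
  have hboundary : |(cos (a * t) - cos (a * s)) * cos (b * t)| ≤ |a| * |t - s| :=
    calc |(cos (a * t) - cos (a * s)) * cos (b * t)|
        ≤ |a * t - a * s| * 1 := by
          rw [abs_mul]
          exact mul_le_mul (abs_cos_sub_cos_le _ _) (abs_cos_le_one _) (abs_nonneg _)
            (abs_nonneg _)
      _ = |a| * |t - s| := by rw [mul_one, ← mul_sub, abs_mul]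
  have hintegral : |∫ r in s..t, sin (a * r) * cos (b * r)| ≤ |t - s| := by
    have h := norm_integral_le_of_norm_le_const (a := s) (b := t)
      (f := fun r => sin (a * r) * cos (b * r)) (C := 1) fun r _ => by
        rw [norm_mul]
        exact mul_le_one₀ (abs_sin_le_one _) (norm_nonneg _) (abs_cos_le_one _)
    simpa using h
  rw [integral_cos_mul_sub_mul_deriv_cos_mul]
  calc _ ≤ |(cos (a * t) - cos (a * s)) * cos (b * t)| +
        |a| * |∫ r in s..t, sin (a * r) * cos (b * r)| := by
        rw [← abs_mul]; exact abs_add_le _ _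
    _ ≤ |a| * |t - s| + |a| * |t - s| := by gcongr
    _ = 2 * |a| * |t - s| := by ring

theorem bound_iii :
    ∃ C > 0, ∀ (s t m n : ℝ), 0 ≤ s → s ≤ t → t ≤ 1 → 0 < m → 0 < n →
      |∫ r in s..t, (Real.cos (m * π * r) - Real.cos (m * π * s)) *
          (-(n * π * Real.sin (n * π * r)))| ≤ C * m * (t - s) := by
  refine ⟨2 * π, by positivity, fun s t m n _ hst _ hm _ => ?_⟩
  have h := abs_integral_cos_mul_sub_mul_deriv_cos_mul_le (m * π) (n * π) s t
  rwa [abs_of_pos (mul_pos hm pi_pos), abs_of_nonneg (sub_nonneg.mpr hst),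
    show 2 * (m * π) = 2 * π * m by ring] at h
end

section
/- Let {αₙ} and {βₙ} be sequences of positive reals, and {cₙ}, {dₙ} sequences of complex numbers with ∑|cₙ| < ∞ and ∑|dₙ| < ∞. Define f_N(t) = ∑_{n=1}^N cₙ e^{i αₙ t} and g_N(t) = ∑_{n=1}^N dₙ e^{i βₙ t}. Then for every s, t ∈ ℝ the limit lim_{N→∞} ∫_s^t f_N(r) g_N'(r) dr exists. -/
/-!
Multiplying out, the `N`-th integral is the sum over the square `[0, N)²` of
`c m * d n * (I * β n * ∫ r in s..t, exp (I * (α m + β n) * r))`. Since the frequencies are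
positive, `β n ≤ α m + β n`, so the bracket has norm at most `2`; the double series is thus
dominated by `2 ‖c m‖ ‖d n‖`, hence summable, and its square partial sums converge.
-/

open Complex Filter intervalIntegral

theorem Finset.tendsto_range_product_range :
    Tendsto (fun N : ℕ => Finset.range N ×ˢ Finset.range N) atTop atTop := by
  refine tendsto_atTop_finset_of_monotone (fun M N hMN => ?_) fun p => ⟨max p.1 p.2 + 1, ?_⟩
  · exact product_subset_product (range_subset_range.mpr hMN) (range_subset_range.mpr hMN)
  · simp only [mem_product, mem_range]
    omega

theorem Summable.tendsto_sum_range_product_range {E : Type*} [AddCommMonoid E]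
    [TopologicalSpace E] {F : ℕ × ℕ → E} (hF : Summable F) :
    Tendsto (fun N : ℕ => ∑ p ∈ Finset.range N ×ˢ Finset.range N, F p) atTop (nhds (∑' p, F p)) :=
  hF.hasSum.comp Finset.tendsto_range_product_range

theorem norm_integral_exp_I_mul_ofReal_le {ω : ℝ} (hω : ω ≠ 0) (s t : ℝ) :
    ‖∫ r in s..t, exp (I * ω * r)‖ ≤ 2 / |ω| := by
  have hIω : I * (ω : ℂ) ≠ 0 := mul_ne_zero I_ne_zero (ofReal_ne_zero.mpr hω)
  have h_unit (r : ℝ) : ‖exp (I * ω * r)‖ = 1 := by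
    rw [mul_assoc, ← ofReal_mul]
    exact norm_exp_I_mul_ofReal _
  rw [integral_exp_mul_complex hIω, norm_div, norm_mul, norm_I, one_mul, norm_real,
    Real.norm_eq_abs]
  gcongr
  calc ‖exp (I * ω * t) - exp (I * ω * s)‖
      ≤ ‖exp (I * ω * t)‖ + ‖exp (I * ω * s)‖ := norm_sub_le _ _
    _ = 2 := by rw [h_unit, h_unit]; norm_num

theorem norm_mul_integral_exp_I_mul_add_le {a b : ℝ} (ha : 0 ≤ a) (hb : 0 < b) (s t : ℝ) :
    ‖I * b * ∫ r in s..t, exp (I * ↑(a + b) * r)‖ ≤ 2 := by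
  have hab : 0 < a + b := by linarith
  calc ‖I * b * ∫ r in s..t, exp (I * ↑(a + b) * r)‖
      = b * ‖∫ r in s..t, exp (I * ↑(a + b) * r)‖ := by
        rw [norm_mul, norm_mul, norm_I, one_mul, norm_real, Real.norm_of_nonneg hb.le]
    _ ≤ b * (2 / |a + b|) := by gcongr; exact norm_integral_exp_I_mul_ofReal_le hab.ne' s t
    _ ≤ 2 := by
        rw [abs_of_pos hab, mul_div_assoc', div_le_iff₀ hab]
        linarith

theorem sum_mul_sum_exp_I_mul (S : Finset ℕ) (α β : ℕ → ℝ) (c d : ℕ → ℂ) (r : ℝ) :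
    (∑ n ∈ S, c n * exp (I * α n * r)) * (∑ n ∈ S, I * β n * d n * exp (I * β n * r)) =
      ∑ p ∈ S ×ˢ S, c p.1 * d p.2 * (I * β p.2 * exp (I * ↑(α p.1 + β p.2) * r)) := by
  rw [Finset.sum_mul_sum, Finset.sum_product]
  refine Finset.sum_congr rfl fun n _ => Finset.sum_congr rfl fun m _ => ?_
  rw [ofReal_add, mul_add, add_mul, exp_add]
  ring

theorem trig_series_pointwise_convergence
    (α β : ℕ → ℝ) (hα : ∀ n, 0 < α n) (hβ : ∀ n, 0 < β n)
    (c d : ℕ → ℂ) (hc : Summable fun n => ‖c n‖) (hd : Summable fun n => ‖d n‖)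
    (s t : ℝ) :
    ∃ L : ℂ, Tendsto (fun N : ℕ =>
      ∫ r in s..t,
        (∑ n ∈ Finset.range N, c n * Complex.exp (Complex.I * (α n) * r)) *
        (∑ n ∈ Finset.range N, Complex.I * (β n) * d n * Complex.exp (Complex.I * (β n) * r)))
      atTop (nhds L) := by
  set F : ℕ × ℕ → ℂ := fun p =>
    c p.1 * d p.2 * (I * β p.2 * ∫ r in s..t, exp (I * ↑(α p.1 + β p.2) * r))
  have h_integral (N : ℕ) : (∫ r in s..t,
      (∑ n ∈ Finset.range N, c n * exp (I * α n * r)) *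
        (∑ n ∈ Finset.range N, I * β n * d n * exp (I * β n * r))) =
      ∑ p ∈ Finset.range N ×ˢ Finset.range N, F p := by
    simp_rw [sum_mul_sum_exp_I_mul]
    rw [integral_finsetSum fun p _ => (by fun_prop : Continuous _).intervalIntegrable _ _]
    simp_rw [integral_const_mul]
    rfl
  have hF : Summable F := by
    refine Summable.of_norm_bounded ((hc.mul_of_nonneg hd (fun _ => norm_nonneg _)
      (fun _ => norm_nonneg _)).mul_left 2) fun p => ?_
    rw [norm_mul, norm_mul (c p.1), mul_comm 2]
    exact mul_le_mul_of_nonneg_left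
      (norm_mul_integral_exp_I_mul_add_le (hα p.1).le (hβ p.2) s t) (by positivity)
  exact ⟨_, by simpa only [h_integral] using hF.tendsto_sum_range_product_range⟩
end

section
/- Let b ≥ 2 be an odd integer and 0 < α < 1 with b^{1-α} > 1 (i.e. b^α < b). Let W(t) = ∑_{n=0}^∞ b^{-nα} cos(bⁿ π t) and W_N(t) = ∑_{n=0}^N b^{-nα} cos(bⁿ π t). Then for every N, the α-Hölder seminorm of W - W_N on [0,1] satisfies ‖W - W_N‖_α ≥ 2 b^{-α}/(1 - b^{-α}); in particular W_N does not converge to W in C^α([0,1]). -/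
open Real

theorem partial_sums_not_holder_convergent_odd
    (b : ℕ) (hb : 2 ≤ b) (hodd : Odd b) (α : ℝ) (hα0 : 0 < α) (hα1 : α < 1)
    (hb1α : 1 < (b : ℝ) ^ ((1:ℝ) - α))
    (W : ℝ → ℝ) (hW : ∀ t, W t = ∑' n : ℕ, (b : ℝ) ^ (-(n : ℝ) * α) * Real.cos ((b:ℝ) ^ n * π * t))
    (WN : ℕ → ℝ → ℝ)
    (hWN : ∀ N t, WN N t = ∑ n ∈ Finset.range (N + 1),
      (b : ℝ) ^ (-(n : ℝ) * α) * Real.cos ((b:ℝ) ^ n * π * t)) :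
    ∀ N : ℕ, ∀ C : ℝ,
      (∀ s ∈ Set.Icc (0:ℝ) 1, ∀ t ∈ Set.Icc (0:ℝ) 1,
        |(W t - WN N t) - (W s - WN N s)| ≤ C * |t - s| ^ α) →
      2 * (b : ℝ) ^ (-α) / (1 - (b : ℝ) ^ (-α)) ≤ C := by
  intro N C hC
  have hb1 : (1:ℝ) < b := by exact_mod_cast Nat.lt_of_lt_of_le one_lt_two hb
  have hb0 : (0:ℝ) < b := lt_trans one_pos hb1
  set r : ℝ := (b:ℝ) ^ (-α) with hr
  have hr0 : 0 < r := Real.rpow_pos_of_pos hb0 _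
  have hr1 : r < 1 := Real.rpow_lt_one_of_one_lt_of_neg hb1 (neg_neg_iff_pos.mpr hα0)
  have h1r : 0 < 1 - r := by linarith
  -- coefficient identity
  have hcoef : ∀ n : ℕ, (b : ℝ) ^ (-(n : ℝ) * α) = r ^ n := by
    intro n
    rw [hr, ← Real.rpow_natCast ((b:ℝ) ^ (-α)) n, ← Real.rpow_mul hb0.le]
    ring_nf
  -- summability
  have hsum : ∀ t : ℝ, Summable (fun n : ℕ =>
      (b : ℝ) ^ (-(n : ℝ) * α) * Real.cos ((b:ℝ) ^ n * π * t)) := by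
    intro t
    have hle : ∀ n : ℕ, |(b : ℝ) ^ (-(n : ℝ) * α) * Real.cos ((b:ℝ) ^ n * π * t)| ≤ r ^ n := by
      intro n
      rw [hcoef, abs_mul, abs_pow, abs_of_pos hr0]
      have := mul_le_mul_of_nonneg_left (Real.abs_cos_le_one ((b:ℝ) ^ n * π * t))
        (pow_nonneg hr0.le n)
      simpa using this
    exact Summable.of_abs (Summable.of_nonneg_of_le (fun n => abs_nonneg _) hle
      (summable_geometric_of_lt_one hr0.le hr1))
  set t : ℝ := (b : ℝ) ^ (-(N:ℝ)) with ht
  have ht0 : 0 < t := Real.rpow_pos_of_pos hb0 _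
  have ht1 : t ≤ 1 := Real.rpow_le_one_of_one_le_of_nonpos hb1.le (neg_nonpos.mpr (Nat.cast_nonneg N))
  -- tail formula
  have tail : ∀ u : ℝ, W u - WN N u = ∑' m : ℕ,
      (b : ℝ) ^ (-((m + (N+1) : ℕ) : ℝ) * α) *
        Real.cos ((b:ℝ) ^ (m + (N+1)) * π * u) := by
    intro u
    have h := Summable.sum_add_tsum_nat_add (N+1) (hsum u)
    rw [hW, hWN]
    linarith
  -- value of cosine at t for tail terms
  have hcos_t : ∀ m : ℕ, Real.cos ((b:ℝ) ^ (m + (N+1)) * π * t) = -1 := by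
    intro m
    have harg : (b:ℝ) ^ (m + (N+1)) * π * t = ((b ^ (m+1) : ℕ) : ℝ) * π := by
      rw [ht, ← Real.rpow_natCast (b:ℝ) (m + (N+1))]
      rw [show (b:ℝ) ^ ((m + (N+1) : ℕ) : ℝ) * π * (b:ℝ) ^ (-(N:ℝ))
          = (b:ℝ) ^ ((m + (N+1) : ℕ) : ℝ) * (b:ℝ) ^ (-(N:ℝ)) * π by ring]
      rw [← Real.rpow_add hb0]
      have : ((m + (N+1) : ℕ) : ℝ) + -(N:ℝ) = ((m + 1 : ℕ) : ℝ) := by push_cast; ring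
      rw [this, Real.rpow_natCast]
      push_cast
      ring
    rw [harg]
    have hoddp : Odd (b ^ (m+1)) := hodd.pow
    have := Real.cos_nat_mul_pi_sub 0 (b ^ (m+1))
    simp only [sub_zero, Real.cos_zero, mul_one] at this
    rw [this, hoddp.neg_one_pow]
  -- tail at t
  have hWt : W t - WN N t = -(r ^ (N+1) * (1 - r)⁻¹) := by
    rw [tail t]
    have : ∀ m : ℕ, (b : ℝ) ^ (-((m + (N+1) : ℕ) : ℝ) * α) *
        Real.cos ((b:ℝ) ^ (m + (N+1)) * π * t) = -(r ^ (N+1) * r ^ m) := by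
      intro m
      rw [hcos_t m, hcoef]
      rw [pow_add]
      ring
    rw [tsum_congr this, tsum_neg, tsum_mul_left, tsum_geometric_of_lt_one hr0.le hr1]
  -- tail at 0
  have hW0 : W 0 - WN N 0 = r ^ (N+1) * (1 - r)⁻¹ := by
    rw [tail 0]
    have : ∀ m : ℕ, (b : ℝ) ^ (-((m + (N+1) : ℕ) : ℝ) * α) *
        Real.cos ((b:ℝ) ^ (m + (N+1)) * π * 0) = r ^ (N+1) * r ^ m := by
      intro m
      rw [mul_zero, Real.cos_zero, hcoef, pow_add]
      ring
    rw [tsum_congr this, tsum_mul_left, tsum_geometric_of_lt_one hr0.le hr1]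
  -- apply hypothesis with s = 0, t
  have key := hC 0 ⟨le_refl 0, zero_le_one⟩ t ⟨ht0.le, ht1⟩
  rw [hWt, hW0, sub_zero] at key
  have habs : |-(r ^ (N+1) * (1 - r)⁻¹) - r ^ (N+1) * (1 - r)⁻¹|
      = 2 * r ^ (N+1) * (1 - r)⁻¹ := by
    rw [abs_of_nonpos (by nlinarith [pow_pos hr0 (N+1), inv_pos.mpr h1r])]
    ring
  have htα : |t| ^ α = r ^ N := by
    rw [abs_of_pos ht0, ht, ← Real.rpow_natCast ((b:ℝ) ^ (-α)) N,
      ← Real.rpow_mul hb0.le, ← Real.rpow_mul hb0.le]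
    ring_nf
  rw [habs, htα] at key
  have hfin : (2 * r ^ (N+1) * (1 - r)⁻¹) / r ^ N ≤ C := by
    rw [div_le_iff₀ (pow_pos hr0 N)]; exact key
  have : 2 * r / (1 - r) = (2 * r ^ (N+1) * (1 - r)⁻¹) / r ^ N := by
    field_simp
    ring
  rw [hr] at this ⊢
  linarith [hfin, this]
end

section
/- Let b ≥ 2 be an even integer and 0 < α < 1. Let W(t) = ∑_{n=0}^∞ b^{-nα} cos(bⁿ π t) and W_N(t) = ∑_{n=0}^N b^{-nα} cos(bⁿ π t). Then for every N, ‖W - W_N‖_α ≥ 2 on [0,1]; in particular W_N does not converge to W in the α-Hölder seminorm. -/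
open Real

theorem partial_sums_not_holder_convergent_even
    (b : ℕ) (hb : 2 ≤ b) (heven : Even b) (α : ℝ) (hα0 : 0 < α) (hα1 : α < 1)
    (W : ℝ → ℝ) (hW : ∀ t, W t = ∑' n : ℕ, (b : ℝ) ^ (-(n : ℝ) * α) * Real.cos ((b:ℝ) ^ n * π * t))
    (WN : ℕ → ℝ → ℝ)
    (hWN : ∀ N t, WN N t = ∑ n ∈ Finset.range (N + 1),
      (b : ℝ) ^ (-(n : ℝ) * α) * Real.cos ((b:ℝ) ^ n * π * t)) :
    ∀ N : ℕ, ∀ C : ℝ,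
      (∀ s ∈ Set.Icc (0:ℝ) 1, ∀ t ∈ Set.Icc (0:ℝ) 1,
        |(W t - WN N t) - (W s - WN N s)| ≤ C * |t - s| ^ α) →
      2 ≤ C := by
  intro N C hC
  have hb1 : (1:ℝ) < (b:ℝ) := by exact_mod_cast hb.trans_lt' one_lt_two
  have hb0 : (0:ℝ) < (b:ℝ) := lt_trans one_pos hb1
  set f : ℕ → ℝ → ℝ := fun n t => (b : ℝ) ^ (-(n : ℝ) * α) * Real.cos ((b:ℝ) ^ n * π * t)
    with hf
  -- rewrite rpow as geometric power
  have hpow : ∀ n : ℕ, (b : ℝ) ^ (-(n : ℝ) * α) = ((b:ℝ) ^ (-α)) ^ n := by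
    intro n
    rw [← Real.rpow_natCast ((b:ℝ) ^ (-α)) n, ← Real.rpow_mul hb0.le]
    ring_nf
  have hr0 : (0:ℝ) ≤ (b:ℝ) ^ (-α) := Real.rpow_nonneg hb0.le _
  have hr1 : (b:ℝ) ^ (-α) < 1 := Real.rpow_lt_one_of_one_lt_of_neg hb1 (neg_neg_of_pos hα0)
  have hsum : ∀ t : ℝ, Summable (fun n => f n t) := by
    intro t
    apply Summable.of_norm
    refine Summable.of_nonneg_of_le (fun n => norm_nonneg _) ?_
      (summable_geometric_of_lt_one hr0 hr1)
    intro n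
    show ‖(b : ℝ) ^ (-(n : ℝ) * α) * Real.cos ((b:ℝ) ^ n * π * t)‖ ≤ ((b:ℝ) ^ (-α)) ^ n
    rw [norm_mul, Real.norm_eq_abs, Real.norm_eq_abs,
      abs_of_pos (Real.rpow_pos_of_pos hb0 _), hpow]
    calc ((b:ℝ)^(-α))^n * |Real.cos ((b:ℝ) ^ n * π * t)| ≤ ((b:ℝ)^(-α))^n * 1 :=
          mul_le_mul_of_nonneg_left (Real.abs_cos_le_one _) (pow_nonneg hr0 n)
      _ = _ := mul_one _
  -- the tail expression
  have htail : ∀ t : ℝ, W t - WN N t = ∑' n : ℕ, f (n + (N+1)) t := by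
    intro t
    rw [hW t, hWN N t]
    exact sub_eq_of_eq_add' (Summable.sum_add_tsum_nat_add (f := fun n => f n t) (N+1) (hsum t)).symm
  set T : ℝ := ((b:ℝ) ^ (N+1))⁻¹ with hT
  have hT0 : 0 < T := by positivity
  have hT1 : T ≤ 1 := by
    rw [hT]
    apply inv_le_one_of_one_le₀
    exact one_le_pow₀ hb1.le
  -- cos values at tail indices
  have hcos : ∀ n : ℕ, (b:ℝ) ^ (n + (N+1)) * π * T = (b:ℝ) ^ n * π := by
    intro n
    rw [hT, pow_add]
    field_simp
  have hcos0 : Real.cos ((b:ℝ) ^ (0 + (N+1)) * π * T) = -1 := by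
    rw [hcos 0]; simp
  have hcosn : ∀ n : ℕ, n ≠ 0 → Real.cos ((b:ℝ) ^ (n + (N+1)) * π * T) = 1 := by
    intro n hn
    rw [hcos n]
    obtain ⟨m, hm⟩ := heven
    obtain ⟨k, rfl⟩ := Nat.exists_eq_succ_of_ne_zero hn
    have : (b:ℝ) ^ (k+1) * π = (m * b ^ k : ℕ) * (2 * π) := by
      push_cast [hm]
      ring
    rw [this, Real.cos_nat_mul_two_pi]
  -- compute the difference
  have hdiff : (W T - WN N T) - (W 0 - WN N 0) = -2 * (b:ℝ) ^ (-((N:ℝ)+1) * α) := by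
    rw [htail T, htail 0]
    rw [← Summable.tsum_sub ((summable_nat_add_iff (N+1)).mpr (hsum T))
        ((summable_nat_add_iff (N+1)).mpr (hsum 0))]
    rw [tsum_eq_single 0 (by
      intro n hn
      simp only [hf]
      rw [hcosn n hn]
      simp)]
    simp only [hf, hcos0]
    have : ((0:ℕ) + (N+1) : ℕ) = N + 1 := by ring
    rw [this, mul_zero, Real.cos_zero]
    push_cast
    ring_nf
  have key := hC 0 ⟨le_refl 0, zero_le_one⟩ T ⟨hT0.le, hT1⟩
  rw [hdiff] at key
  have hTα : |T - 0| ^ α = (b:ℝ) ^ (-((N:ℝ)+1) * α) := by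
    rw [sub_zero, abs_of_pos hT0, hT, ← Real.rpow_natCast (b:ℝ) (N+1),
      ← Real.rpow_neg_one, ← Real.rpow_mul hb0.le, ← Real.rpow_mul hb0.le]
    push_cast
    ring_nf
  rw [hTα] at key
  have hB : (0:ℝ) < (b:ℝ) ^ (-((N:ℝ)+1) * α) := Real.rpow_pos_of_pos hb0 _
  have : |(-2 : ℝ) * (b:ℝ) ^ (-((N:ℝ)+1) * α)| = 2 * (b:ℝ) ^ (-((N:ℝ)+1) * α) := by
    rw [abs_mul, abs_of_pos hB]
    norm_num
  rw [this] at key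
  exact le_of_mul_le_mul_right key hB
end
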